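/- arXiv:1412.4444 — 4 statements merged into one kernel-verified Lean document; each statement's English description precedes it below -/
import Mathlib

section
/- Let 𝒳 be a finite alphabet and n a positive integer. A rate function R(ε,P) (defined for ε∈(0,1) and distributions P on 𝒳) is n-achievable if there exists a single n-length fixed-to-variable code φ such that R(φ;ε,P) ≤ R(ε,P) for all ε∈(0,1) and all P. A function M(ε,P) is n-achievable (for guessing) if there exists a single guessing function G on 𝒳^n such that M(G;ε,P) ≤ M(ε,P) for all ε∈(0,1) and all P. Theorem: R(ε,P) is n-achievable if and only if there exists an n-achievable M(ε,P) such that ⌊log₂ M(ε,P)⌋ ≤ n·R(ε,P) for all ε∈(0,1) and all P. -/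
open scoped BigOperators
open Classical

/-- `P` is a probability distribution on the finite alphabet `𝒳`. -/
def IsDist {𝒳 : Type*} [Fintype 𝒳] (P : 𝒳 → ℝ) : Prop :=
  (∀ x, 0 ≤ P x) ∧ ∑ x, P x = 1

/-- Probability of the event `S` under the i.i.d. product distribution `P^n`. -/
noncomputable def seqProb {𝒳 : Type*} [Fintype 𝒳] (P : 𝒳 → ℝ) (n : ℕ)
    (S : (Fin n → 𝒳) → Prop) : ℝ :=
  ∑ xs : Fin n → 𝒳, if S xs then ∏ i, P (xs i) else 0

/-- The ε-coding rate of an n-length fixed-to-variable code φ: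
`min{k/n : k ∈ ℤ≥0, P(ℓ(φ(Xⁿ)) > k) ≤ ε}`. -/
noncomputable def epsRate {𝒳 : Type*} [Fintype 𝒳] (n : ℕ)
    (φ : (Fin n → 𝒳) → List Bool) (ε : ℝ) (P : 𝒳 → ℝ) : ℝ :=
  ((sInf {k : ℕ | seqProb P n (fun xs => k < (φ xs).length) ≤ ε} : ℕ) : ℝ) / n

/-- Entropy in bits: `H(P) = ∑ₓ −P(x) log₂ P(x)`. -/
noncomputable def ent {𝒳 : Type*} [Fintype 𝒳] (P : 𝒳 → ℝ) : ℝ :=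
  ∑ x, -(P x * Real.logb 2 (P x))

/-- Varentropy: `V(P) = ∑ₓ P(x) (−log₂ P(x) − H(P))²`. -/
noncomputable def varent {𝒳 : Type*} [Fintype 𝒳] (P : 𝒳 → ℝ) : ℝ :=
  ∑ x, P x * (-(Real.logb 2 (P x)) - ent P) ^ 2

/-- The type (empirical distribution) of a sequence. -/
noncomputable def typeOf {𝒳 : Type*} [Fintype 𝒳] {n : ℕ} (xs : Fin n → 𝒳) : 𝒳 → ℝ :=
  fun x => ((Finset.univ.filter fun i => xs i = x).card : ℝ) / n

/-- The size of the type class `T_t = {xⁿ : t_{xⁿ} = t}`. -/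
noncomputable def typeClassCard {𝒳 : Type*} [Fintype 𝒳] (n : ℕ) (t : 𝒳 → ℝ) : ℕ :=
  (Finset.univ.filter fun ys : Fin n → 𝒳 => typeOf ys = t).card

/-- Cardinality of the support `𝒳_P = {x : P(x) > 0}`. -/
noncomputable def suppCard {𝒳 : Type*} [Fintype 𝒳] (P : 𝒳 → ℝ) : ℕ :=
  (Finset.univ.filter fun x => 0 < P x).card

/-- The standard Gaussian tail function `Q(x) = ∫ₓ^∞ e^{−t²/2}/√(2π) dt`. -/
noncomputable def gaussQ (x : ℝ) : ℝ :=
  ∫ t in Set.Ioi x, Real.exp (-t ^ 2 / 2) / Real.sqrt (2 * Real.pi)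

/-- The inverse of the Gaussian tail function `Q`. -/
noncomputable def gaussQinv : ℝ → ℝ := Function.invFun gaussQ

/-- A guessing function's tail quantile `M(G;ε,P) = min{m ≥ 1 : P(G(Xⁿ) > m) ≤ ε}`. -/
noncomputable def guessM {𝒳 : Type*} [Fintype 𝒳] (n : ℕ) (G : (Fin n → 𝒳) → ℕ)
    (ε : ℝ) (P : 𝒳 → ℝ) : ℕ :=
  sInf {m : ℕ | 1 ≤ m ∧ seqProb P n (fun xs => m < G xs) ≤ ε}

/-- A rate function `R(ε,P)` is n-achievable if a single n-length fixed-to-variable code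
(an injective map into binary strings) attains it for every ε ∈ (0,1) and distribution P. -/
def RateAchievable (𝒳 : Type*) [Fintype 𝒳] (n : ℕ) (R : ℝ → (𝒳 → ℝ) → ℝ) : Prop :=
  ∃ φ : (Fin n → 𝒳) → List Bool, Function.Injective φ ∧
    ∀ ε ∈ Set.Ioo (0 : ℝ) 1, ∀ P : 𝒳 → ℝ, IsDist P → epsRate n φ ε P ≤ R ε P

/-- `M(ε,P)` is n-achievable for guessing if a single guessing function
(a bijection from 𝒳ⁿ onto {1,…,|𝒳|ⁿ}) attains it for every ε ∈ (0,1) and distribution P. -/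
def GuessAchievable (𝒳 : Type*) [Fintype 𝒳] (n : ℕ) (M : ℝ → (𝒳 → ℝ) → ℝ) : Prop :=
  ∃ G : (Fin n → 𝒳) → ℕ, Function.Injective G ∧
    (∀ xs, 1 ≤ G xs ∧ G xs ≤ Fintype.card 𝒳 ^ n) ∧
    ∀ ε ∈ Set.Ioo (0 : ℝ) 1, ∀ P : 𝒳 → ℝ, IsDist P → (guessM n G ε P : ℝ) ≤ M ε P

/-!
The bijective base-2 numeration `List Bool ≃ ℕ` sends the strings of length `k` exactly onto
`[2ᵏ - 1, 2ᵏ⁺¹ - 1)`. So coding the `m`-th guess by the `(m - 1)`-th string turns a guessing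
function `G` into a code with `ℓ(φ(xⁿ)) = ⌊log₂ G(xⁿ)⌋`; conversely, guessing in order of
increasing codeword length gives `⌊log₂ G(xⁿ)⌋ ≤ ℓ(φ(xⁿ))`, because fewer than `2ᵏ⁺¹` strings
have length at most `k`. Since `⌊log₂ ·⌋` is monotone, these pointwise relations pass to the
ε-quantiles of `G(Xⁿ)` and `ℓ(φ(Xⁿ))`.
-/

/-- Bijective base-2 numeration, least significant digit first, with digits `false ↦ 1`,
`true ↦ 2`. -/
def binNum : List Bool → ℕ
  | [] => 0
  | b :: t => (if b then 2 else 1) + 2 * binNum t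

theorem two_pow_length_le_binNum_add_one (l : List Bool) : 2 ^ l.length ≤ binNum l + 1 := by
  induction l with
  | nil => simp [binNum]
  | cons b t ih =>
    simp only [binNum, List.length_cons, pow_succ]
    split <;> omega

theorem binNum_add_one_lt_two_pow (l : List Bool) : binNum l + 1 < 2 ^ (l.length + 1) := by
  induction l with
  | nil => simp [binNum]
  | cons b t ih =>
    simp only [binNum, List.length_cons, pow_succ] at ih ⊢
    split <;> omega

theorem log_two_binNum_add_one (l : List Bool) : Nat.log 2 (binNum l + 1) = l.length :=
  Nat.log_eq_of_pow_le_of_lt_pow (two_pow_length_le_binNum_add_one l)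
    (binNum_add_one_lt_two_pow l)

theorem binNum_injective : Function.Injective binNum := by
  intro l
  induction l with
  | nil => rintro (_ | ⟨c, s⟩) h <;> simp only [binNum] at h <;> [rfl; split at h <;> omega]
  | cons b t ih =>
    rintro (_ | ⟨c, s⟩) h
    · simp only [binNum] at h; split at h <;> omega
    · simp only [binNum] at h
      have hbc : b = c := by cases b <;> cases c <;> simp at h ⊢ <;> omega
      subst hbc
      rw [ih (by omega : binNum t = binNum s)]

theorem binNum_surjective : Function.Surjective binNum := by
  intro m
  induction m using Nat.strong_induction_on with
  | _ m ih =>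
    rcases m with _ | m
    · exact ⟨[], rfl⟩
    · obtain ⟨t, ht⟩ := ih (m / 2) (by omega)
      refine ⟨decide (m % 2 = 1) :: t, ?_⟩
      simp only [binNum, ht]
      rcases Nat.mod_two_eq_zero_or_one m with h | h <;> simp [h] <;> omega

noncomputable def binNumEquiv : List Bool ≃ ℕ :=
  Equiv.ofBijective binNum ⟨binNum_injective, binNum_surjective⟩

theorem exists_code_length_eq_log {α : Type*} {G : α → ℕ} (hG : Function.Injective G)
    (hG1 : ∀ x, 1 ≤ G x) :
    ∃ φ : α → List Bool, Function.Injective φ ∧ ∀ x, (φ x).length = Nat.log 2 (G x) := by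
  refine ⟨fun x => binNumEquiv.symm (G x - 1), fun x y h => hG ?_, fun x => ?_⟩
  · have := binNumEquiv.symm.injective h
    have := hG1 x
    have := hG1 y
    omega
  · rw [← log_two_binNum_add_one]
    have hbin : binNum (binNumEquiv.symm (G x - 1)) = G x - 1 := binNumEquiv.apply_symm_apply _
    rw [hbin, Nat.sub_add_cancel (hG1 x)]

section Rank

variable {α : Type*} [Fintype α] (K : α → ℕ)

noncomputable def rankBy (x : α) : ℕ :=
  (Finset.univ.filter fun z => K z < K x).card

variable {K}

theorem rankBy_lt_rankBy {x y : α} (h : K x < K y) : rankBy K x < rankBy K y := by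
  refine Finset.card_lt_card ⟨fun z hz => ?_, fun hsub => ?_⟩
  · simp only [Finset.mem_filter, Finset.mem_univ, true_and] at hz ⊢
    exact hz.trans h
  · have := hsub (show x ∈ Finset.univ.filter fun z => K z < K y by simpa using h)
    simp at this

theorem rankBy_injective (hK : Function.Injective K) : Function.Injective (rankBy K) := by
  intro x y hxy
  rcases lt_trichotomy (K x) (K y) with h | h | h
  · exact absurd hxy (rankBy_lt_rankBy h).ne
  · exact hK h
  · exact absurd hxy (rankBy_lt_rankBy h).ne'

theorem rankBy_lt_card (x : α) : rankBy K x < Fintype.card α :=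
  Finset.card_lt_card (Finset.filter_ssubset.2 ⟨x, Finset.mem_univ x, lt_irrefl _⟩)

theorem rankBy_le (hK : Function.Injective K) (x : α) : rankBy K x ≤ K x := by
  simpa [rankBy] using Finset.card_le_card_of_injOn K (t := Finset.range (K x))
    (fun z hz => by simpa using hz) hK.injOn

end Rank

theorem exists_guess_log_le_length {α : Type*} [Fintype α] {φ : α → List Bool}
    (hφ : Function.Injective φ) :
    ∃ G : α → ℕ, Function.Injective G ∧ (∀ x, 1 ≤ G x ∧ G x ≤ Fintype.card α) ∧
      ∀ x, Nat.log 2 (G x) ≤ (φ x).length := by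
  have hK : Function.Injective (binNum ∘ φ) := binNum_injective.comp hφ
  refine ⟨fun x => rankBy (binNum ∘ φ) x + 1,
    fun x y h => rankBy_injective hK (Nat.succ_injective h),
    fun x => ⟨Nat.le_add_left 1 _, rankBy_lt_card x⟩, fun x => ?_⟩
  rw [← log_two_binNum_add_one]
  exact Nat.log_mono_right (by simpa using rankBy_le hK x)

section Quantiles

variable {𝒳 : Type*} [Fintype 𝒳] {P : 𝒳 → ℝ} {n : ℕ} {ε : ℝ}

theorem seqProb_mono (hP : ∀ x, 0 ≤ P x) {S T : (Fin n → 𝒳) → Prop}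
    (h : ∀ xs, S xs → T xs) : seqProb P n S ≤ seqProb P n T := by
  refine Finset.sum_le_sum fun xs _ => ?_
  by_cases hS : S xs
  · simp [hS, h xs hS]
  · rw [if_neg hS]
    split
    · exact Finset.prod_nonneg fun i _ => hP _
    · exact le_rfl

theorem seqProb_eq_zero {S : (Fin n → 𝒳) → Prop} (h : ∀ xs, ¬ S xs) : seqProb P n S = 0 :=
  Finset.sum_eq_zero fun xs _ => if_neg (h xs)

variable (P n ε) in
noncomputable def tailQuantile (f : (Fin n → 𝒳) → ℕ) : ℕ :=
  sInf {k : ℕ | seqProb P n (fun xs => k < f xs) ≤ ε}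

theorem epsRate_le_iff (hn : 0 < n) {φ : (Fin n → 𝒳) → List Bool} {r : ℝ} :
    epsRate n φ ε P ≤ r ↔ (tailQuantile P n ε (fun xs => (φ xs).length) : ℝ) ≤ n * r := by
  rw [epsRate, div_le_iff₀ (by exact_mod_cast hn), mul_comm]
  rfl

theorem tailQuantile_mem (hε : 0 ≤ ε) (f : (Fin n → 𝒳) → ℕ) :
    seqProb P n (fun xs => tailQuantile P n ε f < f xs) ≤ ε := by
  refine Nat.sInf_mem (s := {k : ℕ | seqProb P n (fun xs => k < f xs) ≤ ε})
    ⟨Finset.univ.sup f, (seqProb_eq_zero fun xs h => ?_).le.trans hε⟩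
  exact h.not_ge (Finset.le_sup (Finset.mem_univ xs))

theorem guessM_mem (hε : 0 ≤ ε) (G : (Fin n → 𝒳) → ℕ) :
    1 ≤ guessM n G ε P ∧ seqProb P n (fun xs => guessM n G ε P < G xs) ≤ ε := by
  refine Nat.sInf_mem (s := {m : ℕ | 1 ≤ m ∧ seqProb P n (fun xs => m < G xs) ≤ ε})
    ⟨Finset.univ.sup G + 1, by omega, (seqProb_eq_zero fun xs h => ?_).le.trans hε⟩
  have := Finset.le_sup (f := G) (Finset.mem_univ xs)
  omega

theorem log_guessM_le_tailQuantile (hP : ∀ x, 0 ≤ P x) (hε : 0 ≤ ε)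
    {G L : (Fin n → 𝒳) → ℕ} (h : ∀ xs, Nat.log 2 (G xs) ≤ L xs) :
    Nat.log 2 (guessM n G ε P) ≤ tailQuantile P n ε L := by
  set k := tailQuantile P n ε L
  have hpow : 2 ^ (k + 1) = 2 ^ k * 2 := pow_succ 2 k
  have hpos : 1 ≤ 2 ^ k := Nat.one_le_two_pow
  have hm : guessM n G ε P ≤ 2 ^ (k + 1) - 1 := by
    refine Nat.sInf_le
      ⟨by omega, (seqProb_mono hP fun xs hxs => ?_).trans (tailQuantile_mem hε L)⟩
    exact (Nat.le_log_of_pow_le one_lt_two (show 2 ^ (k + 1) ≤ G xs by omega)).trans (h xs)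
  calc Nat.log 2 (guessM n G ε P) ≤ Nat.log 2 (2 ^ (k + 1) - 1) := Nat.log_mono_right hm
    _ = k := Nat.log_eq_of_pow_le_of_lt_pow (by omega) (by omega)

theorem tailQuantile_le_log_guessM (hP : ∀ x, 0 ≤ P x) (hε : 0 ≤ ε)
    {G L : (Fin n → 𝒳) → ℕ} (h : ∀ xs, L xs ≤ Nat.log 2 (G xs)) :
    tailQuantile P n ε L ≤ Nat.log 2 (guessM n G ε P) := by
  refine Nat.sInf_le ((seqProb_mono hP fun xs hxs => ?_).trans (guessM_mem hε G).2)
  by_contra hle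
  exact (hxs.trans_le (h xs)).not_ge (Nat.log_mono_right (not_lt.1 hle))

end Quantiles

theorem floor_logb_two_natCast (m : ℕ) : ⌊Real.logb 2 m⌋ = Nat.log 2 m := by
  rw [show (2 : ℝ) = (2 : ℕ) by norm_num, Real.floor_logb_natCast m.cast_nonneg, Int.log_natCast]

/-- A rate function `R(ε,P)` is n-achievable iff there is an n-achievable guessing
function `M(ε,P)` with `⌊log₂ M(ε,P)⌋ ≤ n·R(ε,P)` for all ε ∈ (0,1) and all P. -/
theorem stmt0 (𝒳 : Type*) [Fintype 𝒳] (n : ℕ) (hn : 0 < n)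
    (R : ℝ → (𝒳 → ℝ) → ℝ) :
    RateAchievable 𝒳 n R ↔
      ∃ M : ℝ → (𝒳 → ℝ) → ℝ, GuessAchievable 𝒳 n M ∧
        ∀ ε ∈ Set.Ioo (0 : ℝ) 1, ∀ P : 𝒳 → ℝ, IsDist P →
          (⌊Real.logb 2 (M ε P)⌋ : ℝ) ≤ n * R ε P := by
  constructor
  · rintro ⟨φ, hφ, hR⟩
    obtain ⟨G, hG, hGrange, hlog⟩ := exists_guess_log_le_length hφ
    refine ⟨fun ε P => guessM n G ε P, ⟨G, hG, by simpa using hGrange, fun _ _ _ _ => le_rfl⟩,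
      fun ε hε P hP => ?_⟩
    rw [floor_logb_two_natCast]
    exact le_trans (by exact_mod_cast log_guessM_le_tailQuantile hP.1 hε.1.le hlog)
      ((epsRate_le_iff hn).1 (hR ε hε P hP))
  · rintro ⟨M, ⟨G, hG, hGrange, hM⟩, hMR⟩
    obtain ⟨φ, hφ, hlen⟩ := exists_code_length_eq_log hG fun xs => (hGrange xs).1
    refine ⟨φ, hφ, fun ε hε P hP => (epsRate_le_iff hn).2 ?_⟩
    have hguess := (guessM_mem (P := P) hε.1.le G).1
    calc (tailQuantile P n ε (fun xs => (φ xs).length) : ℝ)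
        ≤ Nat.log 2 (guessM n G ε P) := by
          exact_mod_cast tailQuantile_le_log_guessM hP.1 hε.1.le fun xs => (hlen xs).le
      _ = ⌊Real.logb 2 (guessM n G ε P)⌋ := by rw [floor_logb_two_natCast]; rfl
      _ ≤ ⌊Real.logb 2 (M ε P)⌋ := by
          exact_mod_cast Int.floor_mono
            (Real.logb_le_logb_of_le one_lt_two (by exact_mod_cast hguess) (hM ε hε P hP))
      _ ≤ n * R ε P := hMR ε hε P hP
end

section
/- Suppose |𝒳|=2. For every positive integer n there exists a single n-length fixed-to-variable code φ such that for every ε∈(0,1) and every distribution P on 𝒳, n·R(φ;ε,P) ≤ n·R*(n,ε,P) + 1, where R*(n,ε,P) = min over all n-length fixed-to-variable codes ψ of R(ψ;ε,P) is the optimal ε-rate when the distribution P is known. -/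
open scoped BigOperators
open Classical

/-! Pair every sequence `s ∈ 𝒳ⁿ` with its complement `s̄`. If `j = min(#₀ s, #₁ s)`, the pair has
probability `aʲbⁿ⁻ʲ + aⁿ⁻ʲbʲ` (`a`, `b` the two letter probabilities), and for `j ≤ n/2` this
decreases in `j` whatever `a` and `b` are. Listing the pairs by increasing `j` and giving the
`r`-th sequence of the list the `r`-th shortest binary string yields one code whose first `2m`
sequences carry at least as much probability as any `m` sequences, for every `P`. Any code has
fewer than `2ᵏ⁺¹` codewords of length `≤ k`, while the first `2(2ᵏ⁺¹ - 1)` binary strings have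
length `≤ k + 1`; so the universal code needs at most one bit more than any other code. -/

open Finset Function

def leadingOneValue : List Bool → ℕ
  | [] => 1
  | b :: l => 2 * leadingOneValue l + b.toNat

lemma two_pow_length_le_leadingOneValue : ∀ l : List Bool, 2 ^ l.length ≤ leadingOneValue l
  | [] => le_rfl
  | b :: l => by
    have := two_pow_length_le_leadingOneValue l
    rw [List.length_cons, pow_succ, leadingOneValue]
    omega

lemma leadingOneValue_lt_two_pow : ∀ l : List Bool, leadingOneValue l < 2 ^ (l.length + 1)
  | [] => by simp [leadingOneValue]
  | b :: l => by
    have := leadingOneValue_lt_two_pow l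
    have := Bool.toNat_le b
    rw [List.length_cons, pow_succ, leadingOneValue]
    omega

def leadingOneBits (m : ℕ) : List Bool :=
  if m ≤ 1 then [] else decide (m % 2 = 1) :: leadingOneBits (m / 2)

lemma leadingOneBits_leadingOneValue : ∀ l : List Bool, leadingOneBits (leadingOneValue l) = l
  | [] => by simp [leadingOneValue, leadingOneBits]
  | b :: l => by
    have hpos := (Nat.one_le_two_pow).trans (two_pow_length_le_leadingOneValue l)
    rw [leadingOneValue, leadingOneBits, if_neg (by omega),
      show (2 * leadingOneValue l + b.toNat) / 2 = leadingOneValue l by cases b <;> simp; omega,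
      leadingOneBits_leadingOneValue l]
    cases b <;> simp

lemma leadingOneValue_leadingOneBits {m : ℕ} (hm : 0 < m) :
    leadingOneValue (leadingOneBits m) = m := by
  induction m using Nat.strong_induction_on with
  | _ m ih =>
    rw [leadingOneBits]
    split_ifs with h
    · simp only [leadingOneValue]; omega
    · rw [leadingOneValue, ih (m / 2) (by omega) (by omega)]
      rcases Nat.mod_two_eq_zero_or_one m with h2 | h2 <;> simp [h2] <;> omega

lemma leadingOneValue_injective : Injective leadingOneValue :=
  LeftInverse.injective leadingOneBits_leadingOneValue

lemma two_pow_length_leadingOneBits_le {m : ℕ} (hm : 0 < m) :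
    2 ^ (leadingOneBits m).length ≤ m :=
  (two_pow_length_le_leadingOneValue _).trans_eq (leadingOneValue_leadingOneBits hm)

lemma card_filter_length_le_lt_two_pow {α : Type*} [Fintype α] {ψ : α → List Bool}
    (hψ : Injective ψ) (k : ℕ) : #{s | (ψ s).length ≤ k} < 2 ^ (k + 1) := by
  have hmaps : Set.MapsTo (leadingOneValue ∘ ψ) (univ.filter fun s => (ψ s).length ≤ k : Finset α)
      (Ico 1 (2 ^ (k + 1))) := by
    intro s hs
    simp only [coe_filter, mem_univ, true_and, Set.mem_ofPred_eq] at hs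
    simp only [comp_apply, coe_Ico, Set.mem_Ico]
    exact ⟨Nat.one_le_two_pow.trans (two_pow_length_le_leadingOneValue _),
      (leadingOneValue_lt_two_pow _).trans_le (Nat.pow_le_pow_right two_pos (by omega))⟩
  calc #{s | (ψ s).length ≤ k} ≤ #(Ico 1 (2 ^ (k + 1))) :=
        card_le_card_of_injOn _ hmaps (leadingOneValue_injective.comp hψ).injOn
    _ < 2 ^ (k + 1) := by simp

section Exchange

variable {ι M : Type*} [AddCommMonoid M] [LinearOrder M] [IsOrderedAddMonoid M] {g : ι → M}

lemma sum_le_sum_of_card_le_of_forall_le {X Y : Finset ι} (hcard : #X ≤ #Y)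
    (hY : ∀ y ∈ Y, 0 ≤ g y) (hle : ∀ x ∈ X, ∀ y ∈ Y, g x ≤ g y) :
    ∑ x ∈ X, g x ≤ ∑ y ∈ Y, g y := by
  rcases Y.eq_empty_or_nonempty with rfl | hYne
  · simp [card_eq_zero.1 (Nat.le_zero.1 hcard)]
  obtain ⟨y₀, hy₀, hmin⟩ := Y.exists_min_image g hYne
  calc ∑ x ∈ X, g x ≤ #X • g y₀ := sum_le_card_nsmul _ _ _ fun x hx => hle x hx y₀ hy₀
    _ ≤ #Y • g y₀ := nsmul_le_nsmul_left (hY y₀ hy₀) hcard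
    _ ≤ ∑ y ∈ Y, g y := card_nsmul_le_sum _ _ _ hmin

variable [DecidableEq ι]

lemma sum_le_sum_of_card_le_of_forall_sdiff_le {S T : Finset ι} (hcard : #S ≤ #T)
    (hT : ∀ y ∈ T \ S, 0 ≤ g y) (hle : ∀ x ∈ S \ T, ∀ y ∈ T \ S, g x ≤ g y) :
    ∑ x ∈ S, g x ≤ ∑ y ∈ T, g y := by
  rw [← sum_inter_add_sum_sdiff S T, ← sum_inter_add_sum_sdiff T S, inter_comm]
  exact add_le_add le_rfl
    (sum_le_sum_of_card_le_of_forall_le (card_sdiff_le_card_sdiff_iff.2 hcard) hT hle)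

end Exchange

section Rank

variable {β γ : Type*} [LinearOrder γ] (B : Finset β) (K : β → γ)

def rankIn (x : β) : ℕ := #{y ∈ B | K y < K x}

variable {B K}

lemma rankIn_lt_rankIn {x y : β} (hx : x ∈ B) (h : K x < K y) : rankIn B K x < rankIn B K y :=
  card_lt_card ⟨monotone_filter_right B fun _ _ hz => hz.trans h,
    fun hsub => by simpa using hsub (mem_filter.2 ⟨hx, h⟩)⟩

lemma rankIn_le_rankIn {x y : β} (h : K x ≤ K y) : rankIn B K x ≤ rankIn B K y :=
  card_le_card (monotone_filter_right B fun _ _ hz => hz.trans_le h)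

lemma lt_of_rankIn_lt {x y : β} (h : rankIn B K x < rankIn B K y) : K x < K y :=
  lt_of_not_ge fun hyx => h.not_ge (rankIn_le_rankIn hyx)

lemma rankIn_injOn (hK : Set.InjOn K B) : Set.InjOn (rankIn B K) B := by
  intro x hx y hy h
  rcases lt_trichotomy (K x) (K y) with hlt | heq | hgt
  · exact absurd h (rankIn_lt_rankIn hx hlt).ne
  · exact hK hx hy heq
  · exact absurd h (rankIn_lt_rankIn hy hgt).ne'

lemma rankIn_lt_card {x : β} (hx : x ∈ B) : rankIn B K x < #B :=
  card_lt_card ⟨filter_subset _ _, fun hsub => by simpa using hsub hx⟩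

lemma min_le_card_filter_rankIn_lt (hK : Set.InjOn K B) (m : ℕ) :
    min m #B ≤ #{x ∈ B | rankIn B K x < m} := by
  have hsurj := surj_on_of_inj_on_of_card_le (t := range #B) (fun x _ => rankIn B K x)
    (fun x hx => mem_range.2 (rankIn_lt_card hx)) (fun _ _ hx hy h => rankIn_injOn hK hx hy h)
    (by simp)
  rw [← card_range (min m #B)]
  refine card_le_card_of_surjOn (rankIn B K) fun i hi => ?_
  simp only [coe_range, Set.mem_Iio, lt_min_iff] at hi
  obtain ⟨x, hx, rfl⟩ := hsurj i (mem_range.2 hi.2)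
  exact ⟨x, by simpa using ⟨hx, hi.1⟩, rfl⟩

lemma sum_le_sum_filter_rankIn_lt {M : Type*} [AddCommMonoid M] [LinearOrder M]
    [IsOrderedAddMonoid M] {g : β → M} (hK : Set.InjOn K B) (hg₀ : ∀ x ∈ B, 0 ≤ g x)
    (hg : ∀ x ∈ B, ∀ y ∈ B, K x < K y → g y ≤ g x) {S : Finset β} (hSB : S ⊆ B) {m : ℕ}
    (hS : #S ≤ m) : ∑ x ∈ S, g x ≤ ∑ x ∈ B with rankIn B K x < m, g x := by
  apply sum_le_sum_of_card_le_of_forall_sdiff_le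
  · exact (le_min hS (card_le_card hSB)).trans (min_le_card_filter_rankIn_lt hK m)
  · intro y hy
    exact hg₀ y (mem_filter.1 (mem_sdiff.1 hy).1).1
  · intro x hx y hy
    simp only [mem_sdiff, mem_filter, not_and, not_lt] at hx hy
    exact hg y hy.1.1 x (hSB hx.1) (lt_of_rankIn_lt (hy.1.2.trans_le (hx.2 (hSB hx.1))))

end Rank

section Transversal

variable {α : Type*} [DecidableEq α] (H : Finset α) (σ : α → α)

def transversalRep (s : α) : α := if s ∈ H then s else σ s

variable {H σ}

lemma transversalRep_mem (hH : ∀ s, σ s ∈ H ↔ s ∉ H) (s : α) : transversalRep H σ s ∈ H := by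
  unfold transversalRep
  split_ifs with hs
  · exact hs
  · exact (hH s).2 hs

lemma eq_of_transversalRep_eq (hσ : Injective σ) {s t : α}
    (h : transversalRep H σ s = transversalRep H σ t) (hst : s ∈ H ↔ t ∈ H) : s = t := by
  unfold transversalRep at h
  split_ifs at h <;> first | exact h | exact hσ h | tauto

lemma filter_transversalRep_eq [Fintype α] (hσ : Involutive σ) (hH : ∀ s, σ s ∈ H ↔ s ∉ H) {h : α}
    (hh : h ∈ H) : univ.filter (transversalRep H σ · = h) = {h, σ h} := by
  ext s
  rw [mem_filter_univ, mem_insert, mem_singleton, transversalRep]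
  split_ifs with hs
  · constructor
    · exact Or.inl
    · rintro (rfl | rfl)
      · rfl
      · exact absurd hh ((hH h).1 hs)
  · constructor
    · intro he
      exact Or.inr (by rw [← he, hσ])
    · rintro (rfl | rfl)
      · exact absurd hh hs
      · exact hσ _

lemma sum_filter_transversalRep_eq [Fintype α] {M : Type*} [AddCommMonoid M] (hσ : Involutive σ)
    (hH : ∀ s, σ s ∈ H ↔ s ∉ H) (q : α → M) {h : α} (hh : h ∈ H) :
    ∑ s with transversalRep H σ s = h, q s = q h + q (σ h) := by
  rw [filter_transversalRep_eq hσ hH hh, sum_pair fun he : h = σ h => (hH h).1 (he ▸ hh) hh]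

lemma sum_le_sum_image_transversalRep [Fintype α] {M : Type*} [AddCommMonoid M] [PartialOrder M]
    [IsOrderedAddMonoid M] (hσ : Involutive σ) (hH : ∀ s, σ s ∈ H ↔ s ∉ H) {q : α → M}
    (hq : ∀ s, 0 ≤ q s) (A : Finset α) :
    ∑ s ∈ A, q s ≤ ∑ h ∈ A.image (transversalRep H σ), (q h + q (σ h)) := by
  rw [← sum_fiberwise_of_maps_to fun s hs => mem_image_of_mem (transversalRep H σ) hs]
  gcongr with h hh
  obtain ⟨s, -, rfl⟩ := mem_image.1 hh
  rw [← sum_filter_transversalRep_eq hσ hH q (transversalRep_mem hH s)]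
  exact sum_le_sum_of_subset_of_nonneg (filter_subset_filter _ (subset_univ A)) fun _ _ _ => hq _

lemma sum_filter_transversalRep [Fintype α] {M : Type*} [AddCommMonoid M] (hσ : Involutive σ)
    (hH : ∀ s, σ s ∈ H ↔ s ∉ H) (q : α → M) (p : α → Prop) [DecidablePred p] :
    ∑ s with p (transversalRep H σ s), q s = ∑ h ∈ H with p h, (q h + q (σ h)) := by
  rw [← sum_fiberwise_of_maps_to (g := transversalRep H σ) (t := H.filter p)
    fun s hs => mem_filter.2 ⟨transversalRep_mem hH s, (mem_filter.1 hs).2⟩]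
  refine sum_congr rfl fun h hh => ?_
  rw [← sum_filter_transversalRep_eq hσ hH q (mem_filter.1 hh).1, filter_filter]
  congr 1
  ext s
  simp only [mem_filter, mem_univ, true_and, and_iff_right_iff_imp]
  rintro rfl
  exact (mem_filter.1 hh).2

end Transversal

section PairSum

variable {R : Type*} [CommRing R] [LinearOrder R] [IsStrictOrderedRing R] {a b : R}

lemma pow_mul_pow_add_pow_mul_pow_le_pow_add_pow (ha : 0 ≤ a) (hb : 0 ≤ b) (d e : ℕ) :
    a ^ d * b ^ e + a ^ e * b ^ d ≤ a ^ (d + e) + b ^ (d + e) := by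
  have key : 0 ≤ (a ^ d - b ^ d) * (a ^ e - b ^ e) := by
    rcases le_total a b with hab | hab
    · exact mul_nonneg_of_nonpos_of_nonpos (sub_nonpos.2 (pow_le_pow_left₀ ha hab d))
        (sub_nonpos.2 (pow_le_pow_left₀ ha hab e))
    · exact mul_nonneg (sub_nonneg.2 (pow_le_pow_left₀ hb hab d))
        (sub_nonneg.2 (pow_le_pow_left₀ hb hab e))
  rw [pow_add, pow_add]
  linarith

lemma pow_mul_pow_add_pow_mul_pow_le_of_min_le (ha : 0 ≤ a) (hb : 0 ≤ b) {i j k l : ℕ}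
    (hsum : i + j = k + l) (hmin : min i j ≤ min k l) :
    a ^ k * b ^ l + a ^ l * b ^ k ≤ a ^ i * b ^ j + a ^ j * b ^ i := by
  wlog hij : i ≤ j generalizing i j
  · linarith [this (i := j) (j := i) (by omega) (by rwa [min_comm]) (by omega)]
  wlog hkl : k ≤ l generalizing k l
  · linarith [this (k := l) (l := k) (by omega) (by rwa [min_comm l]) (by omega)]
  obtain ⟨d, rfl⟩ : ∃ d, k = i + d := ⟨k - i, by omega⟩
  obtain ⟨d', rfl⟩ : ∃ d', l = i + d' := ⟨l - i, by omega⟩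
  obtain rfl : j = i + (d + d') := by omega
  calc a ^ (i + d) * b ^ (i + d') + a ^ (i + d') * b ^ (i + d)
      = (a * b) ^ i * (a ^ d * b ^ d' + a ^ d' * b ^ d) := by ring
    _ ≤ (a * b) ^ i * (a ^ (d + d') + b ^ (d + d')) :=
      mul_le_mul_of_nonneg_left (pow_mul_pow_add_pow_mul_pow_le_pow_add_pow ha hb d d')
        (pow_nonneg (mul_nonneg ha hb) i)
    _ = a ^ i * b ^ (i + (d + d')) + a ^ (i + (d + d')) * b ^ i := by ring

end PairSum

section BinarySequences

variable {𝒳 : Type*} (e : 𝒳 ≃ Bool) {n : ℕ}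

def letterCount (s : Fin n → 𝒳) (b : Bool) : ℕ := #{i | e (s i) = b}

def flipSeq (s : Fin n → 𝒳) : Fin n → 𝒳 := fun i => e.symm (!e (s i))

lemma flipSeq_involutive : Involutive (flipSeq e (n := n)) :=
  fun s => funext fun i => by simp [flipSeq]

lemma letterCount_flipSeq (s : Fin n → 𝒳) (b : Bool) :
    letterCount e (flipSeq e s) b = letterCount e s (!b) := by
  simp [letterCount, flipSeq, Bool.not_eq_eq_eq_not]

lemma letterCount_true_add_letterCount_false (s : Fin n → 𝒳) :
    letterCount e s true + letterCount e s false = n := by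
  simpa [letterCount] using card_filter_add_card_filter_not (s := univ) (e <| s ·)

lemma prod_eq_pow_letterCount_mul_pow_letterCount {M : Type*} [CommMonoid M] (P : 𝒳 → M)
    (s : Fin n → 𝒳) : ∏ i, P (s i) =
      P (e.symm true) ^ letterCount e s true * P (e.symm false) ^ letterCount e s false := by
  rw [← prod_fiberwise univ (e <| s ·) (P <| s ·), Fintype.prod_bool]
  congr 1 <;>
  · rw [letterCount, ← prod_const]
    refine prod_congr rfl fun i hi => ?_
    rw [← (mem_filter.1 hi).2, e.symm_apply_apply]

noncomputable def seqKey [Fintype 𝒳] (s : Fin n → 𝒳) : ℕ ×ₗ Fin (Fintype.card (Fin n → 𝒳)) :=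
  toLex (min (letterCount e s true) (letterCount e s false), Fintype.equivFin _ s)

lemma seqKey_injective [Fintype 𝒳] : Injective (seqKey e (n := n)) :=
  fun _ _ h => (Fintype.equivFin _).injective (congrArg Prod.snd (toLex.injective h))

lemma prod_add_prod_flipSeq_le_of_seqKey_lt [Fintype 𝒳] {P : 𝒳 → ℝ} (hP : ∀ x, 0 ≤ P x)
    {s t : Fin n → 𝒳} (h : seqKey e s < seqKey e t) :
    ∏ i, P (t i) + ∏ i, P (flipSeq e t i) ≤ ∏ i, P (s i) + ∏ i, P (flipSeq e s i) := by
  simp only [prod_eq_pow_letterCount_mul_pow_letterCount e P, letterCount_flipSeq,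
    Bool.not_true, Bool.not_false]
  exact pow_mul_pow_add_pow_mul_pow_le_of_min_le (hP _) (hP _)
    (by rw [letterCount_true_add_letterCount_false, letterCount_true_add_letterCount_false])
    (Prod.Lex.monotone_fst _ _ h.le)

def firstLetterFalse [Fintype 𝒳] (hn : 0 < n) : Finset (Fin n → 𝒳) := {s | e (s ⟨0, hn⟩) = false}

lemma flipSeq_mem_firstLetterFalse_iff [Fintype 𝒳] (hn : 0 < n) (s : Fin n → 𝒳) :
    flipSeq e s ∈ firstLetterFalse e hn ↔ s ∉ firstLetterFalse e hn := by
  simp [firstLetterFalse, flipSeq]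

end BinarySequences

section UniversalCode

variable {𝒳 : Type*} [Fintype 𝒳] (e : 𝒳 ≃ Bool) {n : ℕ} (hn : 0 < n)

noncomputable def universalIndex (s : Fin n → 𝒳) : ℕ :=
  2 * rankIn (firstLetterFalse e hn) (seqKey e)
      (transversalRep (firstLetterFalse e hn) (flipSeq e) s) +
    if s ∈ firstLetterFalse e hn then 0 else 1

noncomputable def universalCode (s : Fin n → 𝒳) : List Bool :=
  leadingOneBits (universalIndex e hn s + 1)

lemma universalIndex_injective : Injective (universalIndex e hn) := by
  intro s t h
  unfold universalIndex at h
  have hH := flipSeq_mem_firstLetterFalse_iff e hn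
  have hmem : s ∈ firstLetterFalse e hn ↔ t ∈ firstLetterFalse e hn := by
    split_ifs at h <;> first | omega | tauto
  refine eq_of_transversalRep_eq (flipSeq_involutive e).injective ?_ hmem
  refine rankIn_injOn (seqKey_injective e).injOn (transversalRep_mem hH s)
    (transversalRep_mem hH t) ?_
  split_ifs at h <;> omega

lemma universalCode_injective : Injective (universalCode e hn) := by
  intro s t h
  have := congrArg leadingOneValue h
  rw [universalCode, universalCode, leadingOneValue_leadingOneBits (Nat.succ_pos _),
    leadingOneValue_leadingOneBits (Nat.succ_pos _)] at this
  exact universalIndex_injective e hn (Nat.succ_injective this)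

lemma length_universalCode_le {s : Fin n → 𝒳} {K : ℕ}
    (hs : rankIn (firstLetterFalse e hn) (seqKey e)
      (transversalRep (firstLetterFalse e hn) (flipSeq e) s) < 2 ^ (K + 1) - 1) :
    (universalCode e hn s).length ≤ K + 1 := by
  have hlen := two_pow_length_leadingOneBits_le (Nat.succ_pos (universalIndex e hn s))
  have hidx : universalIndex e hn s + 1 < 2 ^ (K + 2) := by
    unfold universalIndex
    have := Nat.one_le_two_pow (n := K + 1)
    rw [pow_succ]
    split_ifs <;> omega
  exact Nat.lt_succ_iff.1 ((Nat.pow_lt_pow_iff_right (by norm_num)).1 (hlen.trans_lt hidx))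

theorem sum_le_sum_filter_length_universalCode_le {P : 𝒳 → ℝ} (hP : ∀ x, 0 ≤ P x) {K : ℕ}
    (A : Finset (Fin n → 𝒳)) (hA : #A < 2 ^ (K + 1)) :
    ∑ s ∈ A, ∏ i, P (s i) ≤ ∑ s with (universalCode e hn s).length ≤ K + 1, ∏ i, P (s i) := by
  set H := firstLetterFalse e hn
  set σ := flipSeq e (n := n)
  set q : (Fin n → 𝒳) → ℝ := fun s => ∏ i, P (s i)
  have hσ : Involutive σ := flipSeq_involutive e
  have hH : ∀ s, σ s ∈ H ↔ s ∉ H := flipSeq_mem_firstLetterFalse_iff e hn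
  have hq : ∀ s, 0 ≤ q s := fun s => prod_nonneg fun i _ => hP (s i)
  calc ∑ s ∈ A, q s ≤ ∑ h ∈ A.image (transversalRep H σ), (q h + q (σ h)) :=
        sum_le_sum_image_transversalRep hσ hH hq A
    _ ≤ ∑ h ∈ H with rankIn H (seqKey e) h < 2 ^ (K + 1) - 1, (q h + q (σ h)) :=
        sum_le_sum_filter_rankIn_lt (seqKey_injective e).injOn
          (fun h _ => add_nonneg (hq h) (hq (σ h)))
          (fun _ _ _ _ hlt => prod_add_prod_flipSeq_le_of_seqKey_lt e hP hlt)
          (image_subset_iff.2 fun s _ => transversalRep_mem hH s)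
          (card_image_le.trans (by omega))
    _ = ∑ s with rankIn H (seqKey e) (transversalRep H σ s) < 2 ^ (K + 1) - 1, q s :=
        (sum_filter_transversalRep hσ hH q _).symm
    _ ≤ ∑ s with (universalCode e hn s).length ≤ K + 1, q s :=
        sum_le_sum_of_subset_of_nonneg
          (monotone_filter_right _ fun _ _ hs => length_universalCode_le e hn hs)
          fun s _ _ => hq s

end UniversalCode

section EpsLength

variable {𝒳 : Type*} [Fintype 𝒳] {n : ℕ} {P : 𝒳 → ℝ} {ε : ℝ}

noncomputable def epsLength (φ : (Fin n → 𝒳) → List Bool) (ε : ℝ) (P : 𝒳 → ℝ) : ℕ :=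
  sInf {k : ℕ | seqProb P n (fun xs => k < (φ xs).length) ≤ ε}

lemma epsRate_eq_epsLength_div (φ : (Fin n → 𝒳) → List Bool) :
    epsRate n φ ε P = epsLength φ ε P / n :=
  rfl

lemma seqProb_eq_sum_filter (P : 𝒳 → ℝ) (S : (Fin n → 𝒳) → Prop) [DecidablePred S] :
    seqProb P n S = ∑ s with S s, ∏ i, P (s i) := by
  rw [seqProb, sum_filter]
  congr! 2

lemma sum_prod_eq_one (hP : IsDist P) : ∑ s : Fin n → 𝒳, ∏ i, P (s i) = 1 := by
  rw [← Fintype.prod_sum, hP.2, prod_const_one]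

lemma seqProb_lt_length_le_iff (hP : IsDist P) (φ : (Fin n → 𝒳) → List Bool) (k : ℕ) :
    seqProb P n (fun s => k < (φ s).length) ≤ ε ↔
      1 - ε ≤ ∑ s with (φ s).length ≤ k, ∏ i, P (s i) := by
  have htotal :=
    sum_filter_add_sum_filter_not univ (fun s => k < (φ s).length) fun s => ∏ i, P (s i)
  simp only [not_lt, sum_prod_eq_one hP] at htotal
  rw [seqProb_eq_sum_filter]
  constructor <;> intro <;> linarith

lemma seqProb_epsLength_lt_length_le (hε : 0 ≤ ε) (φ : (Fin n → 𝒳) → List Bool) :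
    seqProb P n (fun s => epsLength φ ε P < (φ s).length) ≤ ε := by
  have hne : {k : ℕ | seqProb P n (fun s => k < (φ s).length) ≤ ε}.Nonempty := by
    refine ⟨univ.sup fun s => (φ s).length, ?_⟩
    rw [Set.mem_ofPred_eq, seqProb_eq_sum_filter, filter_false_of_mem fun s _ =>
      not_lt.2 (le_sup (f := fun s => (φ s).length) (mem_univ s)), sum_empty]
    exact hε
  exact Nat.sInf_mem hne

theorem epsLength_le_epsLength_add_one (hP : IsDist P) (hε : 0 ≤ ε)
    {φ ψ : (Fin n → 𝒳) → List Bool}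
    (hφ : ∀ K (A : Finset (Fin n → 𝒳)), #A < 2 ^ (K + 1) →
      ∑ s ∈ A, ∏ i, P (s i) ≤ ∑ s with (φ s).length ≤ K + 1, ∏ i, P (s i))
    (hψ : Injective ψ) : epsLength φ ε P ≤ epsLength ψ ε P + 1 := by
  refine Nat.sInf_le ((seqProb_lt_length_le_iff hP φ _).2 ?_)
  calc 1 - ε ≤ ∑ s with (ψ s).length ≤ epsLength ψ ε P, ∏ i, P (s i) :=
        (seqProb_lt_length_le_iff hP ψ _).1 (seqProb_epsLength_lt_length_le hε ψ)
    _ ≤ _ := hφ _ _ (card_filter_length_le_lt_two_pow hψ _)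

lemma natCast_mul_epsRate_le (hn : 0 < n) {φ : (Fin n → 𝒳) → List Bool} (hφ : Injective φ)
    (h : ∀ ψ : (Fin n → 𝒳) → List Bool, Injective ψ → epsLength φ ε P ≤ epsLength ψ ε P + 1) :
    (n : ℝ) * epsRate n φ ε P ≤
      n * sInf {r : ℝ | ∃ ψ : (Fin n → 𝒳) → List Bool, Injective ψ ∧ r = epsRate n ψ ε P} + 1 := by
  have hn' : (0 : ℝ) < n := Nat.cast_pos.2 hn
  have hlower : ((epsLength φ ε P : ℝ) - 1) / n ≤
      sInf {r : ℝ | ∃ ψ : (Fin n → 𝒳) → List Bool, Injective ψ ∧ r = epsRate n ψ ε P} := by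
    refine le_csInf ⟨_, φ, hφ, rfl⟩ ?_
    rintro _ ⟨ψ, hψ, rfl⟩
    rw [epsRate_eq_epsLength_div]
    gcongr
    have := h ψ hψ
    rw [sub_le_iff_le_add]
    exact_mod_cast this
  rw [epsRate_eq_epsLength_div, mul_div_cancel₀ _ hn'.ne']
  rw [div_le_iff₀ hn'] at hlower
  linarith

end EpsLength

/-- For a binary alphabet there is a single (universal) n-length fixed-to-variable code φ
whose length `n·R(φ;ε,P)` is within one bit of the optimum `n·R*(n,ε,P)` attainable when
the distribution P is known, simultaneously for all ε ∈ (0,1) and all distributions P. -/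
theorem stmt1 (𝒳 : Type*) [Fintype 𝒳] (hX : Fintype.card 𝒳 = 2) (n : ℕ) (hn : 0 < n) :
    ∃ φ : (Fin n → 𝒳) → List Bool, Function.Injective φ ∧
      ∀ ε ∈ Set.Ioo (0 : ℝ) 1, ∀ P : 𝒳 → ℝ, IsDist P →
        (n : ℝ) * epsRate n φ ε P ≤
          (n : ℝ) * sInf {r : ℝ | ∃ ψ : (Fin n → 𝒳) → List Bool,
            Function.Injective ψ ∧ r = epsRate n ψ ε P} + 1 := by
  obtain ⟨e⟩ : Nonempty (𝒳 ≃ Bool) := ⟨Fintype.equivOfCardEq (by rw [hX, Fintype.card_bool])⟩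
  refine ⟨universalCode e hn, universalCode_injective e hn, fun ε hε P hP => ?_⟩
  exact natCast_mul_epsRate_le hn (universalCode_injective e hn) fun ψ hψ =>
    epsLength_le_epsLength_add_one hP hε.1.le
      (fun _ A hA => sum_le_sum_filter_length_universalCode_le e hn hP.1 A hA) hψ
end

section
/- Let t be an n-type on the finite alphabet 𝒳 and T_t its type class. Then n·f(t) + C⁻ ≤ log₂|T_t| ≤ n·f(t), where f(t) = H(t) + ((1−|𝒳|)/(2n))·log₂ n + (1/(2n))·Σ_{x∈𝒳} min{log₂ n, −log₂ t(x)} (with the convention that the summand equals log₂ n when t(x)=0), and C⁻ = ((1−|𝒳|)/2)·log₂(2π) − |𝒳|/(12 ln 2). -/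
open scoped BigOperators
open Classical

/-- The function `f(t) = H(t) + ((1−|𝒳|)/(2n))·log₂ n
+ (1/(2n))·∑ₓ min{log₂ n, −log₂ t(x)}`, with the convention that the summand is
`log₂ n` when `t(x) = 0`. -/
noncomputable def fbound {𝒳 : Type*} [Fintype 𝒳] (n : ℕ) (t : 𝒳 → ℝ) : ℝ :=
  ent t + (1 - (Fintype.card 𝒳 : ℝ)) / (2 * n) * Real.logb 2 n
    + (1 / (2 * n)) * ∑ x,
        (if t x = 0 then Real.logb 2 n else min (Real.logb 2 n) (-(Real.logb 2 (t x))))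

/-!
Write `ρ j = log j! - ((j + 1/2) log j - j)` for the remainder in Stirling's formula. Since
`ρ j - log √2` is the logarithm of Mathlib's `stirlingSeq j`, `ρ` is decreasing on the positive
integers, and Robbins' bound on its successive differences gives
`log √(2π) ≤ ρ j ≤ log √(2π) + 1/(12 j)` for `j ≥ 1`; also `ρ 0 = 0`.

With `k x = n t(x)`, the type class has `n! / ∏ₓ k x!` elements (orbit–stabilizer for the
permutations of the coordinates), and `n f(t) ln 2 = (n + 1/2) ln n - ∑ₓ (k x + 1/2) ln (k x)`
exactly (Lean's `log 0 = 0` makes the symbols with `k x = 0` drop out). As `∑ₓ k x = n`, the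
linear terms of Stirling's formula cancel and `ln |T_t| - n f(t) ln 2 = ρ n - ∑ₓ ρ (k x)`. This is
`≤ 0` because `ρ n ≤ ρ (k x)` for any `x` with `k x ≥ 1`, and it is
`≥ (1 - |𝒳|) log √(2π) - |𝒳|/12` by the two-sided estimates.
-/

open Finset Real Equiv MulAction
open scoped Nat

namespace Stirling

theorem log_stirlingSeq_le {j : ℕ} (hj : j ≠ 0) :
    log (stirlingSeq j) ≤ log √π + 1 / (12 * j) := by
  have hmono : Monotone fun m : ℕ => log (stirlingSeq (m + 1)) - 1 / (12 * (m + 1 : ℕ)) := by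
    refine monotone_nat_of_le_succ fun m => ?_
    have hstep := log_stirlingSeq_sdiff_le (m + 1)
    have hsplit : (1 : ℝ) / (12 * (m + 1 : ℕ) * ((m + 1 : ℕ) + 1))
        = 1 / (12 * (m + 1 : ℕ)) - 1 / (12 * (m + 1 + 1 : ℕ)) := by
      push_cast; field_simp; ring
    linarith
  have hlim : Filter.Tendsto (fun m : ℕ => log (stirlingSeq (m + 1)) - 1 / (12 * (m + 1 : ℕ)))
      Filter.atTop (nhds (log √π - 0)) := by
    refine .sub ((continuousAt_log (by positivity)).tendsto.comp
      (tendsto_stirlingSeq_sqrt_pi.comp (Filter.tendsto_add_atTop_nat 1))) ?_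
    convert (tendsto_const_div_atTop_nhds_zero_nat (1 / 12 : ℝ)).comp
      (Filter.tendsto_add_atTop_nat 1) using 2
    simp only [Function.comp_apply, div_div]
  obtain ⟨m, rfl⟩ := Nat.exists_eq_succ_of_ne_zero hj
  have := hmono.ge_of_tendsto hlim m
  simp only [sub_zero] at this
  linarith

noncomputable def stirlingRemainder (j : ℕ) : ℝ := log j ! - ((j + 1 / 2) * log j - j)

theorem log_factorial_eq (j : ℕ) :
    log j ! = (j + 1 / 2) * log j - j + stirlingRemainder j := by
  rw [stirlingRemainder]; ring

@[simp]
theorem stirlingRemainder_zero : stirlingRemainder 0 = 0 := by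
  simp [stirlingRemainder]

theorem stirlingRemainder_eq {j : ℕ} (hj : j ≠ 0) :
    stirlingRemainder j = log 2 / 2 + log (stirlingSeq j) := by
  have hj' : (j : ℝ) ≠ 0 := by exact_mod_cast hj
  rw [stirlingRemainder, log_stirlingSeq_formula, log_mul two_ne_zero hj',
    log_div hj' (exp_ne_zero 1), log_exp]
  ring

theorem log_two_pi_div_two_eq : log (2 * π) / 2 = log 2 / 2 + log √π := by
  rw [log_mul two_ne_zero pi_ne_zero, log_sqrt pi_pos.le]
  ring

theorem log_two_pi_div_two_nonneg : 0 ≤ log (2 * π) / 2 :=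
  div_nonneg (log_nonneg (by linarith [pi_gt_three])) zero_le_two

theorem log_two_pi_div_two_le_stirlingRemainder {j : ℕ} (hj : j ≠ 0) :
    log (2 * π) / 2 ≤ stirlingRemainder j := by
  rw [stirlingRemainder_eq hj, log_two_pi_div_two_eq]
  gcongr
  exact sqrt_pi_le_stirlingSeq hj

theorem stirlingRemainder_le {j : ℕ} (hj : j ≠ 0) :
    stirlingRemainder j ≤ log (2 * π) / 2 + 1 / (12 * j) := by
  rw [stirlingRemainder_eq hj, log_two_pi_div_two_eq]
  linarith [log_stirlingSeq_le hj]

theorem stirlingRemainder_le_log_two_pi_div_two_add (j : ℕ) :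
    stirlingRemainder j ≤ log (2 * π) / 2 + 1 / 12 := by
  rcases eq_or_ne j 0 with rfl | hj
  · simpa using add_nonneg log_two_pi_div_two_nonneg (by norm_num : (0 : ℝ) ≤ 1 / 12)
  · refine (stirlingRemainder_le hj).trans ?_
    gcongr
    exact le_mul_of_one_le_right (by norm_num) (Nat.one_le_cast.mpr (Nat.one_le_iff_ne_zero.mpr hj))

theorem stirlingRemainder_le_of_le {j m : ℕ} (hj : j ≠ 0) (hjm : j ≤ m) :
    stirlingRemainder m ≤ stirlingRemainder j := by
  obtain ⟨i, rfl⟩ := Nat.exists_eq_succ_of_ne_zero hj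
  obtain ⟨l, rfl⟩ := Nat.exists_eq_succ_of_ne_zero (by omega : m ≠ 0)
  rw [stirlingRemainder_eq (Nat.succ_ne_zero _), stirlingRemainder_eq (Nat.succ_ne_zero _)]
  have := log_stirlingSeq'_antitone (Nat.succ_le_succ_iff.mp hjm)
  simp only [Function.comp_apply] at this
  linarith

theorem stirlingRemainder_nonneg (j : ℕ) : 0 ≤ stirlingRemainder j := by
  rcases eq_or_ne j 0 with rfl | hj
  · simp
  · exact log_two_pi_div_two_nonneg.trans (log_two_pi_div_two_le_stirlingRemainder hj)

end Stirling

open Stirling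

section Multinomial

variable {ι : Type*} [Fintype ι]

theorem stirlingRemainder_sum_le (k : ι → ℕ) :
    stirlingRemainder (∑ i, k i) ≤ ∑ i, stirlingRemainder (k i) := by
  by_cases h : ∃ i, k i ≠ 0
  · obtain ⟨i, hi⟩ := h
    calc stirlingRemainder (∑ i, k i)
        ≤ stirlingRemainder (k i) :=
          stirlingRemainder_le_of_le hi (single_le_sum (fun _ _ => Nat.zero_le _) (mem_univ i))
      _ ≤ ∑ i, stirlingRemainder (k i) :=
          single_le_sum (fun j _ => stirlingRemainder_nonneg (k j)) (mem_univ i)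
  · push Not at h
    simp [h]

theorem sum_stirlingRemainder_le (k : ι → ℕ) (hk : ∑ i, k i ≠ 0) :
    ∑ i, stirlingRemainder (k i)
      ≤ stirlingRemainder (∑ i, k i)
        + ((Fintype.card ι - 1) * (log (2 * π) / 2) + Fintype.card ι / 12) := by
  have hsum : ∑ i, stirlingRemainder (k i) ≤ Fintype.card ι * (log (2 * π) / 2 + 1 / 12) := by
    simpa [mul_add] using
      sum_le_sum fun i (_ : i ∈ univ) => stirlingRemainder_le_log_two_pi_div_two_add (k i)
  linarith [log_two_pi_div_two_le_stirlingRemainder hk]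

theorem log_multinomial_eq (k : ι → ℕ) :
    log (Nat.multinomial univ k) =
      ((∑ i, k i : ℕ) + 1 / 2) * log (∑ i, k i : ℕ) - ∑ i, (k i + 1 / 2) * log (k i)
        + (stirlingRemainder (∑ i, k i) - ∑ i, stirlingRemainder (k i)) := by
  have hspec := congrArg (fun m : ℕ => log m) (Nat.multinomial_spec univ k)
  simp only [Nat.cast_mul, Nat.cast_prod] at hspec
  rw [log_mul (by positivity) (by exact_mod_cast (Nat.multinomial_pos _ _).ne'),
    log_prod (fun i _ => by positivity)] at hspec
  simp only [log_factorial_eq, sum_add_distrib, sum_sub_distrib] at hspec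
  push_cast at hspec ⊢
  linarith

theorem log_multinomial_le (k : ι → ℕ) :
    log (Nat.multinomial univ k) ≤
      ((∑ i, k i : ℕ) + 1 / 2) * log (∑ i, k i : ℕ) - ∑ i, (k i + 1 / 2) * log (k i) := by
  rw [log_multinomial_eq]
  linarith [stirlingRemainder_sum_le k]

theorem le_log_multinomial (k : ι → ℕ) (hk : ∑ i, k i ≠ 0) :
    ((∑ i, k i : ℕ) + 1 / 2) * log (∑ i, k i : ℕ) - ∑ i, (k i + 1 / 2) * log (k i)
        + ((1 - Fintype.card ι) * (log (2 * π) / 2) - Fintype.card ι / 12)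
      ≤ log (Nat.multinomial univ k) := by
  rw [log_multinomial_eq]
  linarith [sum_stirlingRemainder_le k hk]

end Multinomial

section FiberCount

variable {α ι : Type*} [Fintype α] [DecidableEq ι]

theorem mem_orbit_domMulAct_iff {f w : α → ι} :
    f ∈ orbit (Perm α)ᵈᵐᵃ w ↔ ∀ i, #{a | f a = i} = #{a | w a = i} := by
  constructor
  · rintro ⟨g, rfl⟩ i
    exact card_equiv (DomMulAct.mk.symm g) (by simp [DomMulAct.smul_apply])
  · intro h
    have e : ∀ i, {a // f a = i} ≃ {a // w a = i} := fun i =>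
      Fintype.equivOfCardEq (by simpa [Fintype.card_subtype] using h i)
    exact ⟨DomMulAct.mk (ofFiberEquiv e), funext fun a => ofFiberEquiv_map e a⟩

variable [Fintype ι]

theorem ncard_orbit_domMulAct_mul_prod_factorial (w : α → ι) :
    (orbit (Perm α)ᵈᵐᵃ w).ncard * ∏ i, (#{a | w a = i})! = (Fintype.card α)! := by
  have hstab : Nat.card (stabilizer (Perm α)ᵈᵐᵃ w) = ∏ i, (#{a | w a = i})! := by
    rw [Nat.card_congr (subtypeEquiv (p := fun g => g ∈ stabilizer (Perm α)ᵈᵐᵃ w)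
      (q := fun g : Perm α => w ∘ g = w) DomMulAct.mk.symm fun _ => DomMulAct.mem_stabilizer_iff),
      Nat.card_eq_fintype_card, DomMulAct.stabilizer_card]
    simp [Fintype.card_subtype]
  rw [← index_stabilizer, ← hstab, Subgroup.index_mul_card,
    Nat.card_congr DomMulAct.mk.symm, Nat.card_perm, Nat.card_eq_fintype_card]

theorem exists_card_fiber_eq (k : ι → ℕ) (hk : ∑ i, k i = Fintype.card α) :
    ∃ w : α → ι, ∀ i, #{a | w a = i} = k i := by
  obtain e : α ≃ Σ i, Fin (k i) := Fintype.equivOfCardEq (by simp [hk])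
  refine ⟨fun a => (e a).1, fun i => ?_⟩
  rw [← Fintype.card_subtype, Fintype.card_congr ((e.subtypeEquiv fun _ => Iff.rfl).trans
    (sigmaSubtype i)), Fintype.card_fin]

theorem card_filter_card_fiber_eq_multinomial [DecidableEq α] (k : ι → ℕ)
    (hk : ∑ i, k i = Fintype.card α) :
    #{f : α → ι | ∀ i, #{a | f a = i} = k i} = Nat.multinomial univ k := by
  obtain ⟨w, hw⟩ := exists_card_fiber_eq k hk
  have horbit : orbit (Perm α)ᵈᵐᵃ w = ↑({f : α → ι | ∀ i, #{a | f a = i} = k i} : Finset _) := by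
    ext f
    simp [mem_orbit_domMulAct_iff, hw]
  have hcount := ncard_orbit_domMulAct_mul_prod_factorial w
  rw [horbit, Set.ncard_coe_finset] at hcount
  simp only [hw] at hcount
  have hspec := Nat.multinomial_spec univ k
  rw [hk, ← hcount, mul_comm] at hspec
  exact (Nat.eq_of_mul_eq_mul_right (prod_pos fun i _ => Nat.factorial_pos (k i)) hspec).symm

end FiberCount

theorem typeClassCard_eq_multinomial {𝒳 : Type*} [Fintype 𝒳] {n : ℕ} (hn : n ≠ 0) (k : 𝒳 → ℕ)
    (hk : ∑ x, k x = n) :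
    typeClassCard n (fun x => (k x / n : ℝ)) = Nat.multinomial univ k := by
  rw [← card_filter_card_fiber_eq_multinomial (α := Fin n) k (by simpa using hk), typeClassCard]
  congr 1
  refine filter_congr fun ys _ => ?_
  have hn' : (n : ℝ) ≠ 0 := by exact_mod_cast hn
  simp only [typeOf, funext_iff, div_left_inj' hn', Nat.cast_inj]

theorem entropy_summand_mul_log_two {n : ℕ} (hn : n ≠ 0) (j : ℕ) :
    (n * -((j / n : ℝ) * logb 2 (j / n))
      + (if (j / n : ℝ) = 0 then logb 2 n else min (logb 2 n) (-logb 2 (j / n))) / 2) * log 2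
      = (j + 1 / 2) * (log n - log j) := by
  have hn' : (n : ℝ) ≠ 0 := by exact_mod_cast hn
  have hlog2 : log 2 ≠ 0 := (log_pos one_lt_two).ne'
  rcases eq_or_ne j 0 with rfl | hj
  · simp [logb]
    field_simp
  · have hj' : (j : ℝ) ≠ 0 := by exact_mod_cast hj
    have hmin : min (logb 2 n) (-logb 2 (j / n)) = -logb 2 (j / n) := by
      refine min_eq_right ?_
      rw [logb_div hj' hn']
      linarith [logb_nonneg one_lt_two (Nat.one_le_cast.mpr (Nat.one_le_iff_ne_zero.mpr hj))]
    rw [if_neg (div_ne_zero hj' hn'), hmin, logb, log_div hj' hn']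
    field_simp
    ring

theorem fbound_mul_log_two {𝒳 : Type*} [Fintype 𝒳] {n : ℕ} (hn : n ≠ 0) (k : 𝒳 → ℕ)
    (hk : ∑ x, k x = n) :
    n * fbound n (fun x => (k x / n : ℝ)) * log 2
      = (n + 1 / 2) * log n - ∑ x, (k x + 1 / 2) * log (k x) := by
  have hk' : ∑ x, (k x : ℝ) = n := by exact_mod_cast hk
  have hsplit : n * fbound n (fun x => (k x / n : ℝ)) * log 2
      = ∑ x, (n * -((k x / n : ℝ) * logb 2 (k x / n))
          + (if (k x / n : ℝ) = 0 then logb 2 n else min (logb 2 n) (-logb 2 (k x / n))) / 2)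
          * log 2 + (1 - Fintype.card 𝒳) / 2 * log n := by
    have hn' : (n : ℝ) ≠ 0 := by exact_mod_cast hn
    rw [fbound, ent, ← sum_mul, sum_add_distrib, ← mul_sum, ← sum_div, logb]
    field_simp
    ring
  simp only [hsplit, entropy_summand_mul_log_two hn, mul_sub, sum_sub_distrib, ← sum_mul,
    sum_add_distrib, hk', sum_const, card_univ, nsmul_eq_mul]
  ring

/-- Bounds on the size of a type class (Lemma 2): for an n-type t,
`n·f(t) + C⁻ ≤ log₂|T_t| ≤ n·f(t)` where
`C⁻ = ((1−|𝒳|)/2)·log₂(2π) − |𝒳|/(12 ln 2)`. -/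
theorem stmt4 {𝒳 : Type*} [Fintype 𝒳] (n : ℕ) (hn : 0 < n)
    (t : 𝒳 → ℝ) (ht : IsDist t) (htype : ∀ x, ∃ m : ℕ, t x = (m : ℝ) / n) :
    (n : ℝ) * fbound n t
        + ((1 - (Fintype.card 𝒳 : ℝ)) / 2 * Real.logb 2 (2 * Real.pi)
            - (Fintype.card 𝒳 : ℝ) / (12 * Real.log 2))
      ≤ Real.logb 2 (typeClassCard (𝒳 := 𝒳) n t) ∧
    Real.logb 2 (typeClassCard (𝒳 := 𝒳) n t) ≤ (n : ℝ) * fbound n t := by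
  choose k hk using htype
  obtain rfl : t = fun x => (k x / n : ℝ) := funext hk
  have hsum : ∑ x, k x = n := by
    have h := ht.2
    rw [← sum_div, div_eq_one_iff_eq (by positivity)] at h
    exact_mod_cast h
  have hlog2 : 0 < log 2 := log_pos one_lt_two
  have hconst : ((1 - (Fintype.card 𝒳 : ℝ)) / 2 * logb 2 (2 * π)
      - (Fintype.card 𝒳 : ℝ) / (12 * log 2)) * log 2
      = (1 - Fintype.card 𝒳) * (log (2 * π) / 2) - Fintype.card 𝒳 / 12 := by
    rw [logb]
    field_simp
  have hupper := log_multinomial_le k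
  have hlower := le_log_multinomial k (hsum ▸ hn.ne')
  rw [hsum, ← fbound_mul_log_two hn.ne' k hsum] at hupper hlower
  rw [typeClassCard_eq_multinomial hn.ne' k hsum,
    ← log_div_log (x := (Nat.multinomial univ k : ℝ)), le_div_iff₀ hlog2, div_le_iff₀ hlog2,
    add_mul, hconst]
  exact ⟨hlower, hupper⟩
end

section
/- Let k₀ < k₁ < ⋯ < k_I be integers and set t* = 1 / (1 + Σ_{i=1}^{I} (1 − 2^{k_{i−1}−k_i})). Then: (a) for every vector (α₀,…,α_I) of nonnegative reals with Σ_i α_i ≤ 1, min_{0≤i≤I} Σ_{j=0}^{i} 2^{k_j − k_i}·α_j ≤ t*; and (b) there exists a vector (α₀,…,α_I) of nonnegative reals with Σ_i α_i ≤ 1 such that Σ_{j=0}^{i} 2^{k_j − k_i}·α_j = t* for every 0≤i≤I. In other words, t* is the optimal value of the linear program maximizing t subject to Σ_{j≤i} 2^{k_j−k_i}α_j ≥ t for all i, Σ_i α_i ≤ 1, and α_i ≥ 0. -/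
/-!
Write `Pᵢ = ∑_{j≤i} 2^{k_j−k_i} α_j` and `rᵢ = 2^{k_i−k_{i+1}} ≤ 1`. Since `P_{i+1} = rᵢ Pᵢ + α_{i+1}`,
the total mass telescopes to `∑ᵢ αᵢ = P_I + ∑_{i<I} (1 − rᵢ) Pᵢ`, a combination of the `Pᵢ` with
nonnegative weights of total `1/t*`. Hence `∑ αᵢ ≥ (min Pᵢ)/t*`, which is (a). Conversely,
`α₀ = t*` and `α_{i+1} = t*(1 − rᵢ)` make every `Pᵢ` equal to `t*`, and then the identity gives total
mass exactly `1`, which is (b).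
-/

open Finset

section WeightedPrefixSum

variable {b : ℝ} {k : ℕ → ℤ}

noncomputable def weightedPrefixSum (b : ℝ) (k : ℕ → ℤ) (α : ℕ → ℝ) (i : ℕ) : ℝ :=
  ∑ j ∈ range (i + 1), b ^ (k j - k i) * α j

lemma weightedPrefixSum_zero (α : ℕ → ℝ) : weightedPrefixSum b k α 0 = α 0 := by
  simp [weightedPrefixSum]

lemma weightedPrefixSum_succ (hb : b ≠ 0) (α : ℕ → ℝ) (i : ℕ) :
    weightedPrefixSum b k α (i + 1) =
      b ^ (k i - k (i + 1)) * weightedPrefixSum b k α i + α (i + 1) := by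
  rw [weightedPrefixSum, sum_range_succ, weightedPrefixSum, mul_sum, sub_self, zpow_zero, one_mul]
  congr 1
  refine sum_congr rfl fun j _ => ?_
  rw [← mul_assoc, ← zpow_add₀ hb, sub_add_sub_cancel']

lemma sum_range_succ_eq_weightedPrefixSum (hb : b ≠ 0) (α : ℕ → ℝ) (n : ℕ) :
    ∑ i ∈ range (n + 1), α i = weightedPrefixSum b k α n +
      ∑ i ∈ range n, (1 - b ^ (k i - k (i + 1))) * weightedPrefixSum b k α i := by
  induction n with
  | zero => simp [weightedPrefixSum_zero]
  | succ n ih =>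
    rw [sum_range_succ, ih, sum_range_succ _ n, weightedPrefixSum_succ hb]
    ring

lemma zpow_sub_succ_le_one (hb : 1 ≤ b) {n : ℕ} (hk : ∀ i < n, k i ≤ k (i + 1)) {i : ℕ}
    (hi : i < n) : b ^ (k i - k (i + 1)) ≤ 1 :=
  zpow_le_one_of_nonpos₀ hb (sub_nonpos.2 (hk i hi))

lemma exists_mul_weightedPrefixSum_le_sum (hb : 1 ≤ b) {n : ℕ} (hk : ∀ i < n, k i ≤ k (i + 1))
    (α : ℕ → ℝ) : ∃ m ≤ n, (1 + ∑ i ∈ range n, (1 - b ^ (k i - k (i + 1)))) *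
      weightedPrefixSum b k α m ≤ ∑ i ∈ range (n + 1), α i := by
  obtain ⟨m, hm, hmin⟩ :=
    exists_min_image (range (n + 1)) (weightedPrefixSum b k α) nonempty_range_add_one
  refine ⟨m, Nat.lt_succ_iff.1 (mem_range.1 hm), ?_⟩
  rw [sum_range_succ_eq_weightedPrefixSum (zero_lt_one.trans_le hb).ne', add_mul, one_mul, sum_mul]
  gcongr with i hi
  · exact hmin n (self_mem_range_succ n)
  · exact sub_nonneg.2 (zpow_sub_succ_le_one hb hk (mem_range.1 hi))
  · exact hmin i (mem_range.2 (by have := mem_range.1 hi; omega))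

noncomputable def equalizer (b : ℝ) (k : ℕ → ℤ) (n : ℕ) (t : ℝ) : ℕ → ℝ
  | 0 => t
  | i + 1 => if i < n then t * (1 - b ^ (k i - k (i + 1))) else 0

lemma equalizer_nonneg (hb : 1 ≤ b) {n : ℕ} (hk : ∀ i < n, k i ≤ k (i + 1)) {t : ℝ}
    (ht : 0 ≤ t) (i : ℕ) : 0 ≤ equalizer b k n t i := by
  cases i with
  | zero => exact ht
  | succ i =>
    dsimp only [equalizer]
    split_ifs with hi
    · exact mul_nonneg ht (sub_nonneg.2 (zpow_sub_succ_le_one hb hk hi))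
    · exact le_rfl

lemma weightedPrefixSum_equalizer (hb : b ≠ 0) {n : ℕ} (t : ℝ) :
    ∀ i ≤ n, weightedPrefixSum b k (equalizer b k n t) i = t := by
  intro i hi
  induction i with
  | zero => exact weightedPrefixSum_zero _
  | succ i ih =>
    rw [weightedPrefixSum_succ hb, ih (by omega), equalizer, if_pos (by omega)]
    ring

lemma sum_equalizer (hb : b ≠ 0) (n : ℕ) (t : ℝ) :
    ∑ i ∈ range (n + 1), equalizer b k n t i =
      t * (1 + ∑ i ∈ range n, (1 - b ^ (k i - k (i + 1)))) := by
  rw [sum_range_succ_eq_weightedPrefixSum hb, weightedPrefixSum_equalizer hb t n le_rfl,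
    sum_congr rfl fun i hi => by
      rw [weightedPrefixSum_equalizer hb t i (mem_range.1 hi).le], ← sum_mul]
  ring

end WeightedPrefixSum

/-- The linear program from the prefix-code converse: for strictly increasing integers
`k₀ < k₁ < ⋯ < k_I`, the optimal value of maximizing t subject to
`∑_{j≤i} 2^{k_j−k_i} α_j ≥ t` for all i, `∑ᵢ αᵢ ≤ 1`, `αᵢ ≥ 0` is
`t* = 1/(1 + ∑_{i=1}^I (1 − 2^{k_{i−1}−k_i}))`:
(a) every feasible α has `min_i ∑_{j≤i} 2^{k_j−k_i} α_j ≤ t*`, and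
(b) some feasible α attains `∑_{j≤i} 2^{k_j−k_i} α_j = t*` for every i. -/
theorem stmt15 (I : ℕ) (k : ℕ → ℤ) (hk : ∀ i < I, k i < k (i + 1)) :
    (∀ α : ℕ → ℝ, (∀ i, 0 ≤ α i) → ∑ i ∈ Finset.range (I + 1), α i ≤ 1 →
      ∃ i ≤ I, ∑ j ∈ Finset.range (i + 1), (2 : ℝ) ^ (k j - k i) * α j ≤
        1 / (1 + ∑ i ∈ Finset.range I, (1 - (2 : ℝ) ^ (k i - k (i + 1))))) ∧
    (∃ α : ℕ → ℝ, (∀ i, 0 ≤ α i) ∧ ∑ i ∈ Finset.range (I + 1), α i ≤ 1 ∧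
      ∀ i ≤ I, ∑ j ∈ Finset.range (i + 1), (2 : ℝ) ^ (k j - k i) * α j =
        1 / (1 + ∑ i ∈ Finset.range I, (1 - (2 : ℝ) ^ (k i - k (i + 1))))) := by
  set S := ∑ i ∈ range I, (1 - (2 : ℝ) ^ (k i - k (i + 1)))
  have hk' : ∀ i < I, k i ≤ k (i + 1) := fun i hi => (hk i hi).le
  have hS : 0 < 1 + S := by
    have : 0 ≤ S := sum_nonneg fun i hi =>
      sub_nonneg.2 (zpow_sub_succ_le_one one_le_two hk' (mem_range.1 hi))
    linarith
  refine ⟨fun α _ hα => ?_, equalizer 2 k I (1 / (1 + S)),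
    equalizer_nonneg one_le_two hk' (by positivity), ?_,
    weightedPrefixSum_equalizer two_ne_zero _⟩
  · obtain ⟨m, hm, hle⟩ := exists_mul_weightedPrefixSum_le_sum one_le_two hk' α
    refine ⟨m, hm, (le_div_iff₀ hS).2 ?_⟩
    rw [mul_comm]
    exact hle.trans hα
  · rw [sum_equalizer two_ne_zero, one_div_mul_cancel hS.ne']
end
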